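/- arXiv:2003.06363 — 6 statements merged into one kernel-verified Lean document; each statement's English description precedes it below -/
import Mathlib

section
/- Let X ⊆ {0,1}^n be finite nonempty, π ∈ ℝ^n, π₀ = max_{x ∈ X} πᵀx, and suppose λᵢ := max{πᵀx : x ∈ X, xᵢ = 0} − max{πᵀx : x ∈ X, xᵢ = 1} > 0 for some i. Define π' by π'ⱼ = πⱼ for j ≠ i and π'ᵢ = πᵢ + λᵢ, and π'₀ = π₀. Then π'ᵀx ≤ π'₀ for all x ∈ X. -/
/-- validity of the lifted inequality in the positive-slack case. -/
theorem stmt_3 {n : ℕ} (X : Finset (Fin n → ℝ)) (hX : X.Nonempty)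
    (hbin : ∀ x ∈ X, ∀ j, x j = 0 ∨ x j = 1)
    (π : Fin n → ℝ) (π0 : ℝ)
    (hπ0 : IsGreatest {v : ℝ | ∃ x ∈ X, v = ∑ j, π j * x j} π0)
    (i : Fin n) (μ0 μ1 : ℝ)
    (hμ0 : IsGreatest {v : ℝ | ∃ x ∈ X, x i = 0 ∧ v = ∑ j, π j * x j} μ0)
    (hμ1 : IsGreatest {v : ℝ | ∃ x ∈ X, x i = 1 ∧ v = ∑ j, π j * x j} μ1)
    (hpos : 0 < μ0 - μ1)
    (π' : Fin n → ℝ) (hπ' : π' = Function.update π i (π i + (μ0 - μ1))) :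
    ∀ x ∈ X, (∑ j, π' j * x j) ≤ π0 := by
  intro x hx
  have hsum : (∑ j, π' j * x j) = (∑ j, π j * x j) + (μ0 - μ1) * x i := by
    subst hπ'
    rw [← Finset.sum_add_sum_compl {i}]
    rw [← Finset.sum_add_sum_compl {i} (fun j => π j * x j)]
    simp only [Finset.sum_singleton, Function.update_self]
    have : ∀ j ∈ ({i} : Finset (Fin n))ᶜ,
        Function.update π i (π i + (μ0 - μ1)) j * x j = π j * x j := by
      intro j hj
      simp only [Finset.mem_compl, Finset.mem_singleton] at hj
      rw [Function.update_of_ne hj]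
    rw [Finset.sum_congr rfl this]
    ring
  have hμ0le : μ0 ≤ π0 := by
    obtain ⟨y, hy, hyi, hyv⟩ := hμ0.1
    exact hπ0.2 ⟨y, hy, hyv⟩
  rcases hbin x hx i with h0 | h1
  · rw [hsum, h0, mul_zero, add_zero]
    exact hπ0.2 ⟨x, hx, rfl⟩
  · rw [hsum, h1, mul_one]
    have : (∑ j, π j * x j) ≤ μ1 := hμ1.2 ⟨x, hx, h1, rfl⟩
    linarith
end

section
/- Let X ⊆ {0,1}^n be finite nonempty, π ∈ ℝ^n, π₀ = max_{x ∈ X} πᵀx, and suppose λᵢ := max{πᵀx : x ∈ X, xᵢ = 0} − max{πᵀx : x ∈ X, xᵢ = 1} < 0 for some i. Define π' by π'ⱼ = πⱼ for j ≠ i, π'ᵢ = πᵢ + λᵢ, and π'₀ = π₀ + λᵢ. Then π'ᵀx ≤ π'₀ for all x ∈ X. -/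
/-- validity of the lifted inequality in the negative-slack case. -/
theorem stmt_4 {n : ℕ} (X : Finset (Fin n → ℝ)) (hX : X.Nonempty)
    (hbin : ∀ x ∈ X, ∀ j, x j = 0 ∨ x j = 1)
    (π : Fin n → ℝ) (π0 : ℝ)
    (hπ0 : IsGreatest {v : ℝ | ∃ x ∈ X, v = ∑ j, π j * x j} π0)
    (i : Fin n) (μ0 μ1 : ℝ)
    (hμ0 : IsGreatest {v : ℝ | ∃ x ∈ X, x i = 0 ∧ v = ∑ j, π j * x j} μ0)
    (hμ1 : IsGreatest {v : ℝ | ∃ x ∈ X, x i = 1 ∧ v = ∑ j, π j * x j} μ1)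
    (hneg : μ0 - μ1 < 0)
    (π' : Fin n → ℝ) (hπ' : π' = Function.update π i (π i + (μ0 - μ1))) :
    ∀ x ∈ X, (∑ j, π' j * x j) ≤ π0 + (μ0 - μ1) := by
  intro x hx
  have hsum : ∑ j, π' j * x j = (∑ j, π j * x j) + (μ0 - μ1) * x i := by
    have h1 : ∀ j, π' j * x j = π j * x j + (if j = i then (μ0 - μ1) * x i else 0) := by
      intro j
      by_cases h : j = i
      · subst h; simp [hπ']; ring
      · simp [hπ', Function.update_of_ne h, h]
    simp only [h1, Finset.sum_add_distrib, Finset.sum_ite_eq', Finset.mem_univ, if_true]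
  rw [hsum]
  rcases hbin x hx i with h0 | h1
  · -- x i = 0 : sum ≤ μ0 ≤ μ1 + (μ0 - μ1) ≤ π0 + (μ0 - μ1)
    have hle : (∑ j, π j * x j) ≤ μ0 := hμ0.2 ⟨x, hx, h0, rfl⟩
    have hμ1π0 : μ1 ≤ π0 := by
      obtain ⟨y, hy, _, hval⟩ := hμ1.1
      rw [hval]; exact hπ0.2 ⟨y, hy, rfl⟩
    rw [h0]
    linarith
  · have hle : (∑ j, π j * x j) ≤ π0 := hπ0.2 ⟨x, hx, rfl⟩
    rw [h1]
    linarith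
end

section
/- Let X ⊆ {0,1}^n be finite nonempty, π ∈ ℝ^n, π₀ = max_{x ∈ X} πᵀx, and suppose λᵢ > 0 where λᵢ := max{πᵀx : x ∈ X, xᵢ = 0} − max{πᵀx : x ∈ X, xᵢ = 1}. Define the lifted inequality (π', π'₀) with π'ᵢ = πᵢ + λᵢ, π'ⱼ = πⱼ for j ≠ i, π'₀ = π₀. Then every x ∈ X with πᵀx = π₀ satisfies π'ᵀx = π'₀, and there exists x* ∈ X with π'ᵀx* = π'₀ but πᵀx* < π₀ (namely any maximizer of πᵀx over {x ∈ X : xᵢ = 1}). -/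
/-- in the positive-slack case the lifted inequality keeps the old face tight and
gains a new tight point (any maximizer over `{x ∈ X : x i = 1}`), which was not on the old face. -/
theorem stmt_5 {n : ℕ} (X : Finset (Fin n → ℝ)) (hX : X.Nonempty)
    (hbin : ∀ x ∈ X, ∀ j, x j = 0 ∨ x j = 1)
    (π : Fin n → ℝ) (π0 : ℝ)
    (hπ0 : IsGreatest {v : ℝ | ∃ x ∈ X, v = ∑ j, π j * x j} π0)
    (i : Fin n) (μ0 μ1 : ℝ)
    (hμ0 : IsGreatest {v : ℝ | ∃ x ∈ X, x i = 0 ∧ v = ∑ j, π j * x j} μ0)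
    (hμ1 : IsGreatest {v : ℝ | ∃ x ∈ X, x i = 1 ∧ v = ∑ j, π j * x j} μ1)
    (hpos : 0 < μ0 - μ1)
    (π' : Fin n → ℝ) (hπ' : π' = Function.update π i (π i + (μ0 - μ1))) :
    (∀ x ∈ X, (∑ j, π j * x j) = π0 → (∑ j, π' j * x j) = π0) ∧
    (∀ x ∈ X, x i = 1 → (∑ j, π j * x j) = μ1 →
        (∑ j, π' j * x j) = π0 ∧ (∑ j, π j * x j) < π0) ∧
    (∃ x ∈ X, (∑ j, π' j * x j) = π0 ∧ (∑ j, π j * x j) < π0) := by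
  -- key sum identity
  have hsum : ∀ x : Fin n → ℝ, (∑ j, π' j * x j) = (∑ j, π j * x j) + (μ0 - μ1) * x i := by
    intro x
    have : (∑ j, π' j * x j) - (∑ j, π j * x j) = (μ0 - μ1) * x i := by
      rw [← Finset.sum_sub_distrib]
      have : ∀ j, π' j * x j - π j * x j = (π' j - π j) * x j := by intro j; ring
      simp_rw [this]
      rw [Finset.sum_eq_single i]
      · simp [hπ']
      · intro b _ hb
        simp [hπ', Function.update_of_ne hb]
      · simp
    linarith [this]
  -- μ0 ≤ π0
  have hμ0le : μ0 ≤ π0 := by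
    obtain ⟨x, hx, hxi, hxv⟩ := hμ0.1
    exact hxv ▸ hπ0.2 ⟨x, hx, hxv ▸ rfl⟩
  have hμ1le : μ1 ≤ π0 := by
    obtain ⟨x, hx, hxi, hxv⟩ := hμ1.1
    exact hxv ▸ hπ0.2 ⟨x, hx, hxv ▸ rfl⟩
  -- π0 = μ0
  have hπ0eq : π0 = μ0 := by
    obtain ⟨x, hx, hxv⟩ := hπ0.1
    rcases hbin x hx i with h0 | h1
    · exact le_antisymm (hxv ▸ hμ0.2 ⟨x, hx, h0, hxv ▸ rfl⟩) hμ0le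
    · have : π0 ≤ μ1 := hxv ▸ hμ1.2 ⟨x, hx, h1, hxv ▸ rfl⟩
      linarith
  refine ⟨?_, ?_, ?_⟩
  · intro x hx htight
    have hxi : x i = 0 := by
      rcases hbin x hx i with h0 | h1
      · exact h0
      · have : (∑ j, π j * x j) ≤ μ1 := hμ1.2 ⟨x, hx, h1, rfl⟩
        linarith
    rw [hsum, hxi]; ring_nf; exact htight
  · intro x hx hxi htight
    constructor
    · rw [hsum, hxi, htight]; linarith
    · rw [htight]; linarith
  · obtain ⟨x, hx, hxi, hxv⟩ := hμ1.1
    refine ⟨x, hx, ?_, ?_⟩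
    · rw [hsum, hxi, ← hxv]; linarith
    · rw [← hxv]; linarith
end

section
/- Let X ⊆ {0,1}^n be finite nonempty, π ∈ ℝ^n, π₀ = max_{x ∈ X} πᵀx, and let F(π) = {x ∈ X : πᵀx = π₀}. Let S⁰(π) = {i : λᵢ = 0} where λᵢ = max{πᵀx : x ∈ X, xᵢ = 0} − max{πᵀx : x ∈ X, xᵢ = 1}. Then the dimension of the affine hull of F(π) (as a subset of ℝ^n) is at most |S⁰(π)|. -/
/-- the dimension of (the affine hull of) the face of maximizers is at most the
number of indices with zero disjunctive slack. -/
theorem stmt_8 {n : ℕ} (X : Finset (Fin n → ℝ)) (hX : X.Nonempty)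
    (hbin : ∀ x ∈ X, ∀ j, x j = 0 ∨ x j = 1)
    (π : Fin n → ℝ) (π0 : ℝ)
    (hπ0 : IsGreatest {v : ℝ | ∃ x ∈ X, v = ∑ j, π j * x j} π0)
    (μ0 μ1 : Fin n → ℝ)
    (hμ0 : ∀ i, IsGreatest {v : ℝ | ∃ x ∈ X, x i = 0 ∧ v = ∑ j, π j * x j} (μ0 i))
    (hμ1 : ∀ i, IsGreatest {v : ℝ | ∃ x ∈ X, x i = 1 ∧ v = ∑ j, π j * x j} (μ1 i)) :
    Module.finrank ℝ
        ↥(vectorSpan ℝ {x : Fin n → ℝ | x ∈ X ∧ (∑ j, π j * x j) = π0}) ≤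
      Set.ncard {i : Fin n | μ0 i - μ1 i = 0} := by
  classical
  set S : Set (Fin n) := {i : Fin n | μ0 i - μ1 i = 0} with hS
  set F : Set (Fin n → ℝ) := {x : Fin n → ℝ | x ∈ X ∧ (∑ j, π j * x j) = π0} with hF
  -- If some maximizer has coordinate i equal to 0, then μ0 i = π0; similarly for 1.
  have h0 : ∀ z ∈ F, ∀ i, z i = 0 → μ0 i = π0 := by
    intro z hz i hzi
    obtain ⟨w, hw, hwi, hwv⟩ := (hμ0 i).1
    have hle : μ0 i ≤ π0 := hπ0.2 ⟨w, hw, hwv⟩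
    exact le_antisymm hle ((hμ0 i).2 ⟨z, hz.1, hzi, hz.2.symm⟩)
  have h1 : ∀ z ∈ F, ∀ i, z i = 1 → μ1 i = π0 := by
    intro z hz i hzi
    obtain ⟨w, hw, hwi, hwv⟩ := (hμ1 i).1
    have hle : μ1 i ≤ π0 := hπ0.2 ⟨w, hw, hwv⟩
    exact le_antisymm hle ((hμ1 i).2 ⟨z, hz.1, hzi, hz.2.symm⟩)
  -- all elements of F agree off S
  have key : ∀ x ∈ F, ∀ y ∈ F, ∀ i ∉ S, x i = y i := by
    intro x hx y hy i hi
    by_contra hne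
    have hiS : μ0 i - μ1 i ≠ 0 := hi
    rcases hbin x hx.1 i with hx0 | hx1 <;> rcases hbin y hy.1 i with hy0 | hy1
    · exact hne (hx0.trans hy0.symm)
    · exact hiS (by rw [h0 x hx i hx0, h1 y hy i hy1, sub_self])
    · exact hiS (by rw [h0 y hy i hy0, h1 x hx i hx1, sub_self])
    · exact hne (hx1.trans hy1.symm)
  -- the submodule of vectors vanishing off S
  let W : Submodule ℝ (Fin n → ℝ) :=
    { carrier := {v | ∀ i ∉ S, v i = 0}
      add_mem' := by intro a b ha hb i hi; simp [ha i hi, hb i hi]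
      zero_mem' := by intro i hi; rfl
      smul_mem' := by intro c a ha i hi; simp [ha i hi] }
  have hsub : vectorSpan ℝ F ≤ W := by
    rw [vectorSpan_def]
    refine Submodule.span_le.2 ?_
    rintro v ⟨x, hx, y, hy, rfl⟩
    intro i hi
    simp [key x hx y hy i hi]
  -- W injects into S → ℝ
  let f : W →ₗ[ℝ] (S → ℝ) :=
    (LinearMap.funLeft ℝ ℝ (fun i : S => (i : Fin n))).comp W.subtype
  have hf : Function.Injective f := by
    intro v w hvw
    ext i
    by_cases hiS : i ∈ S
    · exact congrFun hvw ⟨i, hiS⟩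
    · rw [v.2 i hiS, w.2 i hiS]
  have h2 : Module.finrank ℝ ↥W ≤ Module.finrank ℝ (S → ℝ) :=
    LinearMap.finrank_le_finrank_of_injective hf
  have h3 : Module.finrank ℝ (S → ℝ) = S.ncard := by
    rw [Module.finrank_pi, ← Nat.card_eq_fintype_card, Nat.card_coe_set_eq]
  calc Module.finrank ℝ ↥(vectorSpan ℝ F) ≤ Module.finrank ℝ ↥W :=
        Submodule.finrank_mono hsub
    _ ≤ S.ncard := h3 ▸ h2
end

section
/- Let X ⊆ {0,1}^n be finite nonempty, π ∈ ℝ^n, π₀ = max_{x ∈ X} πᵀx. Suppose i is an index with λᵢ > 0 and |λᵢ| < |λᵢ'| for every other index i' with λᵢ' ≠ 0. Let (π', π'₀) be the lifted inequality with π'ᵢ = πᵢ + λᵢ, π'ⱼ = πⱼ otherwise, π'₀ = π₀. Then for every index i' ≠ i with λᵢ' > 0, every maximizer x ∈ X of π'ᵀx (i.e., π'ᵀx = max_{z∈X} π'ᵀz) satisfies xᵢ' = 0; and for every i' ≠ i with λᵢ' < 0, every such maximizer satisfies xᵢ' = 1. -/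
/-- lifting with the strictly minimum absolute nonzero slack keeps all other
nonzero-slack coordinates fixed on the new face of maximizers. -/
theorem stmt_10 {n : ℕ} (X : Finset (Fin n → ℝ)) (hX : X.Nonempty)
    (hbin : ∀ x ∈ X, ∀ j, x j = 0 ∨ x j = 1)
    (π : Fin n → ℝ) (π0 : ℝ)
    (hπ0 : IsGreatest {v : ℝ | ∃ x ∈ X, v = ∑ j, π j * x j} π0)
    (μ0 μ1 : Fin n → ℝ)
    (hμ0 : ∀ i, IsGreatest {v : ℝ | ∃ x ∈ X, x i = 0 ∧ v = ∑ j, π j * x j} (μ0 i))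
    (hμ1 : ∀ i, IsGreatest {v : ℝ | ∃ x ∈ X, x i = 1 ∧ v = ∑ j, π j * x j} (μ1 i))
    (i : Fin n) (hpos : 0 < μ0 i - μ1 i)
    (hmin : ∀ i', i' ≠ i → μ0 i' - μ1 i' ≠ 0 → |μ0 i - μ1 i| < |μ0 i' - μ1 i'|)
    (π' : Fin n → ℝ) (hπ' : π' = Function.update π i (π i + (μ0 i - μ1 i))) :
    ∀ x ∈ X, (∀ z ∈ X, (∑ j, π' j * z j) ≤ ∑ j, π' j * x j) →
      ∀ i', i' ≠ i →
        (0 < μ0 i' - μ1 i' → x i' = 0) ∧ (μ0 i' - μ1 i' < 0 → x i' = 1) := by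
  set lam := μ0 i - μ1 i with hlam
  have hsum : ∀ z : Fin n → ℝ, (∑ j, π' j * z j) = (∑ j, π j * z j) + lam * z i := by
    intro z
    subst hπ'
    have : ∀ j : Fin n, Function.update π i (π i + lam) j * z j
        = π j * z j + (if j = i then lam * z j else 0) := by
      intro j
      by_cases h : j = i <;> simp [Function.update_apply, h] <;> ring
    rw [Finset.sum_congr rfl (fun j _ => this j), Finset.sum_add_distrib]
    simp
  intro x hx hmax i' hne
  -- upper bounds
  have hub0 : ∀ z ∈ X, z i = 0 → (∑ j, π j * z j) ≤ μ0 i := fun z hz h0 =>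
    (hμ0 i).2 ⟨z, hz, h0, rfl⟩
  have hub1 : ∀ z ∈ X, z i = 1 → (∑ j, π j * z j) ≤ μ1 i := fun z hz h1 =>
    (hμ1 i).2 ⟨z, hz, h1, rfl⟩
  -- value of the maximizer is μ0 i
  have hub : (∑ j, π' j * x j) ≤ μ0 i := by
    rcases hbin x hx i with h | h
    · rw [hsum x, h, mul_zero, add_zero]; exact hub0 x hx h
    · rw [hsum x, h, mul_one]
      have := hub1 x hx h
      simp only [hlam]; linarith
  have hlb : μ0 i ≤ ∑ j, π' j * x j := by
    obtain ⟨z, hz, hz0, hzv⟩ := (hμ0 i).1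
    have h := hmax z hz
    rw [hsum z, hz0, mul_zero, add_zero] at h
    linarith [hzv ▸ h]
  have hval : (∑ j, π' j * x j) = μ0 i := le_antisymm hub hlb
  -- π0 = μ0 i
  have hμ0le : ∀ k, μ0 k ≤ π0 := by
    intro k
    obtain ⟨z, hz, _, hzv⟩ := (hμ0 k).1
    exact hπ0.2 ⟨z, hz, hzv⟩
  have hμ1le : ∀ k, μ1 k ≤ π0 := by
    intro k
    obtain ⟨z, hz, _, hzv⟩ := (hμ1 k).1
    exact hπ0.2 ⟨z, hz, hzv⟩
  have hπ0eq : π0 = μ0 i := by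
    obtain ⟨y, hy, hyv⟩ := hπ0.1
    rcases hbin y hy i with h | h
    · have := hub0 y hy h
      have := hμ0le i
      linarith [hyv ▸ this]
    · have h1 := hub1 y hy h
      have := hμ0le i
      have : (∑ j, π j * y j) ≤ μ1 i := h1
      have hμ := hμ0le i
      have : π0 ≤ μ1 i := hyv ▸ h1
      linarith
  constructor
  · intro hpos'
    rcases hbin x hx i' with h0 | h1
    · exact h0
    · exfalso
      have hle : (∑ j, π j * x j) ≤ μ1 i' := (hμ1 i').2 ⟨x, hx, h1, rfl⟩
      have habs := hmin i' hne (ne_of_gt hpos')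
      rw [abs_of_pos hpos, abs_of_pos hpos'] at habs
      have hμle := hμ0le i'
      rcases hbin x hx i with h | h
      · have hv : (∑ j, π j * x j) = μ0 i := by
          have := hsum x; rw [h, mul_zero, add_zero] at this; linarith [hval, this]
        linarith
      · have hv : (∑ j, π j * x j) = μ0 i - lam := by
          have := hsum x; rw [h, mul_one] at this; linarith [hval, this]
        linarith
  · intro hneg'
    rcases hbin x hx i' with h0 | h1
    · exfalso
      have hle : (∑ j, π j * x j) ≤ μ0 i' := (hμ0 i').2 ⟨x, hx, h0, rfl⟩
      have habs := hmin i' hne (ne_of_lt hneg')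
      rw [abs_of_pos hpos, abs_of_neg hneg'] at habs
      have hμle := hμ1le i'
      rcases hbin x hx i with h | h
      · have hv : (∑ j, π j * x j) = μ0 i := by
          have := hsum x; rw [h, mul_zero, add_zero] at this; linarith [hval, this]
        linarith
      · have hv : (∑ j, π j * x j) = μ0 i - lam := by
          have := hsum x; rw [h, mul_one] at this; linarith [hval, this]
        linarith
    · exact h1
end

section
/- Let X ⊆ {0,1}^n be finite nonempty with valid inequality πᵀx ≤ π₀ where π₀ = max_{x∈X} πᵀx, and assume for each i both {x ∈ X : xᵢ=0} and {x ∈ X : xᵢ=1} are nonempty. The sequential lifting procedure — repeatedly picking any index i with λᵢ(π) ≠ 0 and applying the lifting update (π'ᵢ = πᵢ + λᵢ; π'₀ = π₀ if λᵢ > 0, π'₀ = π₀ + λᵢ if λᵢ < 0) — terminates after at most n iterations with an inequality whose disjunctive slack vector is zero. -/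
/-- One step of the sequential combinatorial lifting procedure: pick any index `i` with
nonzero disjunctive slack and apply the lifting update. -/
def LiftStep {n : ℕ} (X : Finset (Fin n → ℝ)) (p q : (Fin n → ℝ) × ℝ) : Prop :=
  ∃ (i : Fin n) (μ0 μ1 : ℝ),
    IsGreatest {v : ℝ | ∃ x ∈ X, x i = 0 ∧ v = ∑ j, p.1 j * x j} μ0 ∧
    IsGreatest {v : ℝ | ∃ x ∈ X, x i = 1 ∧ v = ∑ j, p.1 j * x j} μ1 ∧
    μ0 - μ1 ≠ 0 ∧
    q.1 = Function.update p.1 i (p.1 i + (μ0 - μ1)) ∧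
    (0 < μ0 - μ1 → q.2 = p.2) ∧ (μ0 - μ1 < 0 → q.2 = p.2 + (μ0 - μ1))

/-- The tight face of an inequality on `X`. -/
def LiftFace {n : ℕ} (X : Finset (Fin n → ℝ)) (p : (Fin n → ℝ) × ℝ) : Set (Fin n → ℝ) :=
  {x | x ∈ X ∧ ∑ j, p.1 j * x j = p.2}

lemma sum_update_mul {n : ℕ} (π x : Fin n → ℝ) (i : Fin n) (a : ℝ) :
    ∑ j, Function.update π i a j * x j = (∑ j, π j * x j) + (a - π i) * x i := by
  classical
  rw [← Finset.sum_erase_add _ _ (Finset.mem_univ i),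
      ← Finset.sum_erase_add _ (fun j => π j * x j) (Finset.mem_univ i)]
  have h : ∀ j ∈ Finset.univ.erase i,
      Function.update π i a j * x j = π j * x j := by
    intro j hj
    rw [Function.update_of_ne (Finset.ne_of_mem_erase hj)]
  rw [Finset.sum_congr rfl h, Function.update_self]
  ring

lemma lift_step_main {n : ℕ} (X : Finset (Fin n → ℝ))
    (hbin : ∀ x ∈ X, ∀ j, x j = 0 ∨ x j = 1)
    (p q : (Fin n → ℝ) × ℝ)
    (hG : IsGreatest {v : ℝ | ∃ x ∈ X, v = ∑ j, p.1 j * x j} p.2)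
    (hs : LiftStep X p q) :
    IsGreatest {v : ℝ | ∃ x ∈ X, v = ∑ j, q.1 j * x j} q.2 ∧
    LiftFace X p ⊆ LiftFace X q ∧
    ∃ i : Fin n, (∀ x ∈ LiftFace X p, ∀ y ∈ LiftFace X p, x i = y i) ∧
      (∃ x ∈ LiftFace X q, x i = 0) ∧ (∃ y ∈ LiftFace X q, y i = 1) := by
  obtain ⟨i, μ0, μ1, h0, h1, hne, hq1, hpos, hneg⟩ := hs
  -- value of the new inequality
  have qval : ∀ x : Fin n → ℝ,
      ∑ j, q.1 j * x j = (∑ j, p.1 j * x j) + (μ0 - μ1) * x i := by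
    intro x
    rw [hq1, sum_update_mul]
    ring
  -- attainer of p.2
  obtain ⟨xh, hxhX, hxh⟩ := hG.1
  -- attainers of μ0, μ1
  obtain ⟨x0, hx0X, hx0i, hx0v⟩ := h0.1
  obtain ⟨x1, hx1X, hx1i, hx1v⟩ := h1.1
  have hμ0le : μ0 ≤ p.2 := by
    rw [hx0v]; exact hG.2 ⟨x0, hx0X, rfl⟩
  have hμ1le : μ1 ≤ p.2 := by
    rw [hx1v]; exact hG.2 ⟨x1, hx1X, rfl⟩
  rcases lt_or_gt_of_ne hne with hlt | hgt
  · -- μ0 - μ1 < 0, i.e. μ0 < μ1 ; new rhs is p.2 + (μ0 - μ1), face points have x i = 1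
    have hq2 : q.2 = p.2 + (μ0 - μ1) := hneg hlt
    have hμ0μ1 : μ0 < μ1 := by linarith
    -- p.2 = μ1
    have hp2 : p.2 = μ1 := by
      rcases hbin xh hxhX i with h | h
      · have : p.2 ≤ μ0 := by
          rw [hxh]; exact h0.2 ⟨xh, hxhX, h, rfl⟩
        linarith
      · have : p.2 ≤ μ1 := by
          rw [hxh]; exact h1.2 ⟨xh, hxhX, h, rfl⟩
        linarith
    have hface1 : ∀ x ∈ LiftFace X p, x i = 1 := by
      rintro x ⟨hxX, hxv⟩
      rcases hbin x hxX i with h | h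
      · exfalso
        have : ∑ j, p.1 j * x j ≤ μ0 := h0.2 ⟨x, hxX, h, rfl⟩
        rw [hxv, hp2] at this; linarith
      · exact h
    have hsub : LiftFace X p ⊆ LiftFace X q := by
      rintro x ⟨hxX, hxv⟩
      refine ⟨hxX, ?_⟩
      rw [qval, hxv, hface1 x ⟨hxX, hxv⟩, hq2]; ring
    have hx0face : x0 ∈ LiftFace X q := by
      refine ⟨hx0X, ?_⟩
      rw [qval, ← hx0v, hx0i, hq2, hp2]; ring
    refine ⟨⟨⟨x0, hx0X, hx0face.2.symm⟩, ?_⟩, hsub, i, ?_, ⟨x0, hx0face, hx0i⟩,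
      ⟨xh, hsub ⟨hxhX, hxh.symm⟩, hface1 xh ⟨hxhX, hxh.symm⟩⟩⟩
    · rintro v ⟨x, hxX, rfl⟩
      rw [qval, hq2, hp2]
      rcases hbin x hxX i with h | h
      · have : ∑ j, p.1 j * x j ≤ μ0 := h0.2 ⟨x, hxX, h, rfl⟩
        rw [h]; linarith
      · have : ∑ j, p.1 j * x j ≤ μ1 := h1.2 ⟨x, hxX, h, rfl⟩
        rw [h]; linarith
    · intro x hx y hy
      rw [hface1 x hx, hface1 y hy]
  · -- 0 < μ0 - μ1 : new rhs is p.2, face points have x i = 0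
    have hq2 : q.2 = p.2 := hpos hgt
    have hμ0μ1 : μ1 < μ0 := by linarith
    have hp2 : p.2 = μ0 := by
      rcases hbin xh hxhX i with h | h
      · have : p.2 ≤ μ0 := by
          rw [hxh]; exact h0.2 ⟨xh, hxhX, h, rfl⟩
        linarith
      · have : p.2 ≤ μ1 := by
          rw [hxh]; exact h1.2 ⟨xh, hxhX, h, rfl⟩
        linarith
    have hface0 : ∀ x ∈ LiftFace X p, x i = 0 := by
      rintro x ⟨hxX, hxv⟩
      rcases hbin x hxX i with h | h
      · exact h
      · exfalso
        have : ∑ j, p.1 j * x j ≤ μ1 := h1.2 ⟨x, hxX, h, rfl⟩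
        rw [hxv, hp2] at this; linarith
    have hsub : LiftFace X p ⊆ LiftFace X q := by
      rintro x ⟨hxX, hxv⟩
      refine ⟨hxX, ?_⟩
      rw [qval, hxv, hface0 x ⟨hxX, hxv⟩, hq2]; ring
    have hx1face : x1 ∈ LiftFace X q := by
      refine ⟨hx1X, ?_⟩
      rw [qval, ← hx1v, hx1i, hq2, hp2]; ring
    refine ⟨⟨⟨x1, hx1X, hx1face.2.symm⟩, ?_⟩, hsub, i, ?_,
      ⟨xh, hsub ⟨hxhX, hxh.symm⟩, hface0 xh ⟨hxhX, hxh.symm⟩⟩, ⟨x1, hx1face, hx1i⟩⟩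
    · rintro v ⟨x, hxX, rfl⟩
      rw [qval, hq2, hp2]
      rcases hbin x hxX i with h | h
      · have : ∑ j, p.1 j * x j ≤ μ0 := h0.2 ⟨x, hxX, h, rfl⟩
        rw [h]; linarith
      · have : ∑ j, p.1 j * x j ≤ μ1 := h1.2 ⟨x, hxX, h, rfl⟩
        rw [h]; linarith
    · intro x hx y hy
      rw [hface0 x hx, hface0 y hy]

/-- starting from a valid tight inequality, every chain of lifting steps has
length at most `n`, and when no further step is possible all disjunctive slacks are zero. -/
theorem stmt_19 {n : ℕ} (X : Finset (Fin n → ℝ)) (hX : X.Nonempty)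
    (hbin : ∀ x ∈ X, ∀ j, x j = 0 ∨ x j = 1)
    (hboth : ∀ i : Fin n, (∃ x ∈ X, x i = 0) ∧ (∃ x ∈ X, x i = 1))
    (π : Fin n → ℝ) (π0 : ℝ)
    (hπ0 : IsGreatest {v : ℝ | ∃ x ∈ X, v = ∑ j, π j * x j} π0)
    (f : ℕ → (Fin n → ℝ) × ℝ) (hf0 : f 0 = (π, π0))
    (m : ℕ) (hstep : ∀ k < m, LiftStep X (f k) (f (k + 1))) :
    m ≤ n ∧
    ((¬ ∃ q, LiftStep X (f m) q) →
      ∀ (i : Fin n) (μ0 μ1 : ℝ),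
        IsGreatest {v : ℝ | ∃ x ∈ X, x i = 0 ∧ v = ∑ j, (f m).1 j * x j} μ0 →
        IsGreatest {v : ℝ | ∃ x ∈ X, x i = 1 ∧ v = ∑ j, (f m).1 j * x j} μ1 →
        μ0 - μ1 = 0) := by
  classical
  constructor
  · -- counting the "two-valued" coordinates of the growing tight face
    set S : ℕ → Finset (Fin n) := fun k =>
      Finset.univ.filter (fun i =>
        (∃ x ∈ LiftFace X (f k), x i = 0) ∧ (∃ y ∈ LiftFace X (f k), y i = 1)) with hS
    have key : ∀ k ≤ m,
        IsGreatest {v : ℝ | ∃ x ∈ X, v = ∑ j, (f k).1 j * x j} (f k).2 ∧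
        k ≤ (S k).card := by
      intro k
      induction k with
      | zero =>
        intro _
        refine ⟨?_, Nat.zero_le _⟩
        rw [hf0]
        exact hπ0
      | succ k ih =>
        intro hk
        obtain ⟨hG, hcard⟩ := ih (Nat.le_of_succ_le hk)
        obtain ⟨hG', hsub, i, hconst, hi0, hi1⟩ :=
          lift_step_main X hbin (f k) (f (k + 1)) hG (hstep k hk)
        refine ⟨hG', ?_⟩
        have hmono : S k ⊆ S (k + 1) := by
          intro j hj
          simp only [hS, Finset.mem_filter, Finset.mem_univ, true_and] at hj ⊢
          obtain ⟨⟨x, hx, hxj⟩, ⟨y, hy, hyj⟩⟩ := hj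
          exact ⟨⟨x, hsub hx, hxj⟩, ⟨y, hsub hy, hyj⟩⟩
        have hiS : i ∉ S k := by
          simp only [hS, Finset.mem_filter, Finset.mem_univ, true_and]
          rintro ⟨⟨x, hx, hxi⟩, ⟨y, hy, hyi⟩⟩
          have := hconst x hx y hy
          rw [hxi, hyi] at this
          norm_num at this
        have hiS' : i ∈ S (k + 1) := by
          simp only [hS, Finset.mem_filter, Finset.mem_univ, true_and]
          exact ⟨hi0, hi1⟩
        have : S k ⊂ S (k + 1) :=
          ⟨hmono, fun h => hiS (h hiS')⟩
        have := Finset.card_lt_card this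
        omega
    have := (key m le_rfl).2
    have hcn : (S m).card ≤ n := by
      calc (S m).card ≤ Finset.univ.card := Finset.card_le_univ _
        _ = n := by simp
    omega
  · -- if no step is possible, all slacks vanish
    intro hno i μ0 μ1 h0 h1
    by_contra hne
    apply hno
    refine ⟨(Function.update (f m).1 i ((f m).1 i + (μ0 - μ1)),
      if 0 < μ0 - μ1 then (f m).2 else (f m).2 + (μ0 - μ1)), i, μ0, μ1, h0, h1, hne, rfl,
      ?_, ?_⟩
    · intro h; simp [h]
    · intro h
      simp only
      rw [if_neg (by linarith)]
end
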